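/- Let (V, g) be an n-dimensional scalar product space with n ≥ 3 and let C be an algebraic curvature tensor on V. Then the Weyl curvature tensor W_C of C is an algebraic curvature tensor that is trace-free, i.e. tr_g^{1,4}(W_C) = 0. Moreover, if C itself is trace-free, i.e. tr_g^{1,4}(C) = 0, then W_C = C. -/

import Mathlib

/-!
The Kulkarni–Nomizu product of two symmetric bilinear forms is an algebraic curvature tensor,
so `W_C = C - P_C ⊼ g` is one. Contracting the first and fourth slots with the dual families
`b`, `d` gives `tr(h ⊼ g) = (tr h) g + (n - 2) h` for bilinear `h`; for `h = P_C` we have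
`tr P_C = S_C / (2(n - 1))`, so `tr(P_C ⊼ g) = Ric_C` and `W_C` is trace-free. If `Ric_C = 0`
then `S_C = 0`, `P_C = 0` and `W_C = C`.
-/
open ExteriorAlgebra

/-- `C` is an algebraic curvature tensor: it is multilinear and satisfies the
symmetries of the Riemann curvature tensor. -/
def IsACT {V : Type} [AddCommGroup V] [Module ℝ V] (C : V → V → V → V → ℝ) : Prop :=
  ((∀ (a : ℝ) (u u' v x y : V), C (a • u + u') v x y = a * C u v x y + C u' v x y) ∧
   (∀ (a : ℝ) (u v v' x y : V), C u (a • v + v') x y = a * C u v x y + C u v' x y) ∧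
   (∀ (a : ℝ) (u v x x' y : V), C u v (a • x + x') y = a * C u v x y + C u v x' y) ∧
   (∀ (a : ℝ) (u v x y y' : V), C u v x (a • y + y') = a * C u v x y + C u v x y')) ∧
  (∀ u v x y, C u v x y = -C v u x y) ∧
  (∀ u v x y, C u v x y = -C u v y x) ∧
  (∀ u v x y, C u v x y = C x y u v) ∧
  (∀ u v x y, C u v x y + C x u v y + C v x u y = 0)

/-- The Ricci curvature of `C`: the `g`-trace over the first and fourth slots, computed
using a basis `b` with `g`-dual family `d`. -/
noncomputable def ricci {V : Type} [AddCommGroup V] [Module ℝ V] {n : ℕ}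
    (C : V → V → V → V → ℝ) (b d : Fin n → V) : V → V → ℝ :=
  fun x y => ∑ j, C (d j) x y (b j)

/-- The scalar curvature of `C`. -/
noncomputable def scalCurv {V : Type} [AddCommGroup V] [Module ℝ V] {n : ℕ}
    (C : V → V → V → V → ℝ) (b d : Fin n → V) : ℝ :=
  ∑ j, ricci C b d (d j) (b j)

/-- The Schouten tensor of `C`. -/
noncomputable def schouten {V : Type} [AddCommGroup V] [Module ℝ V] {n : ℕ}
    (g : LinearMap.BilinForm ℝ V) (C : V → V → V → V → ℝ) (b d : Fin n → V) : V → V → ℝ :=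
  fun x y => (1/((n : ℝ) - 2)) *
    (ricci C b d x y - (scalCurv C b d / (2*((n : ℝ) - 1))) * g x y)

/-- The Kulkarni–Nomizu product of two symmetric bilinear forms. -/
def kulkarniNomizu {V : Type} [AddCommGroup V] [Module ℝ V]
    (h k : V → V → ℝ) : V → V → V → V → ℝ :=
  fun u v x y => h u y * k v x + h v x * k u y - h u x * k v y - h v y * k u x

/-- The Weyl curvature tensor of `C`: `W_C = C - P_C ⊼ g`. -/
noncomputable def weyl {V : Type} [AddCommGroup V] [Module ℝ V] {n : ℕ}
    (g : LinearMap.BilinForm ℝ V) (C : V → V → V → V → ℝ) (b d : Fin n → V) :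
    V → V → V → V → ℝ :=
  fun u v x y => C u v x y -
    kulkarniNomizu (schouten g C b d) (fun a b' => g a b') u v x y

variable {V : Type} [AddCommGroup V] [Module ℝ V]

lemma map_sum_smul_of_linear (T : V → ℝ)
    (hT : ∀ (a : ℝ) (u u' : V), T (a • u + u') = a * T u + T u')
    {ι : Type*} (s : Finset ι) (c : ι → ℝ) (w : ι → V) :
    T (∑ i ∈ s, c i • w i) = ∑ i ∈ s, c i * T (w i) := by
  have h0 : T 0 = 0 := by
    have h := hT (-1) 0 0
    simp only [add_zero, smul_zero, neg_mul, one_mul] at h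
    linarith
  induction s using Finset.cons_induction with
  | empty => simpa using h0
  | cons a s ha ih =>
    rw [Finset.sum_cons, Finset.sum_cons, ← ih]
    exact hT _ _ _

structure IsBilin (h : V → V → ℝ) : Prop where
  map_smul_add_left : ∀ (a : ℝ) (x x' y : V), h (a • x + x') y = a * h x y + h x' y
  map_smul_add_right : ∀ (a : ℝ) (x y y' : V), h x (a • y + y') = a * h x y + h x y'

structure IsSymmBilin (h : V → V → ℝ) : Prop extends IsBilin h where
  symm : ∀ x y, h x y = h y x

lemma isSymmBilin_bilinForm {g : LinearMap.BilinForm ℝ V} (hg : ∀ x y, g x y = g y x) :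
    IsSymmBilin (fun x y => g x y) where
  map_smul_add_left a x x' y := by simp
  map_smul_add_right a x y y' := by simp
  symm := hg

lemma IsACT.sub {C D : V → V → V → V → ℝ} (hC : IsACT C) (hD : IsACT D) :
    IsACT (fun u v x y => C u v x y - D u v x y) := by
  obtain ⟨⟨hC₁, hC₂, hC₃, hC₄⟩, hC_anti₁, hC_anti₂, hC_pair, hC_bianchi⟩ := hC
  obtain ⟨⟨hD₁, hD₂, hD₃, hD₄⟩, hD_anti₁, hD_anti₂, hD_pair, hD_bianchi⟩ := hD
  refine ⟨⟨?_, ?_, ?_, ?_⟩, ?_, ?_, ?_, ?_⟩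
  · intros; dsimp only; rw [hC₁, hD₁]; ring
  · intros; dsimp only; rw [hC₂, hD₂]; ring
  · intros; dsimp only; rw [hC₃, hD₃]; ring
  · intros; dsimp only; rw [hC₄, hD₄]; ring
  · intros; dsimp only; rw [hC_anti₁, hD_anti₁]; ring
  · intros; dsimp only; rw [hC_anti₂, hD_anti₂]; ring
  · intros; dsimp only; rw [hC_pair, hD_pair]
  · intro u v x y; linarith [hC_bianchi u v x y, hD_bianchi u v x y]

lemma IsSymmBilin.isACT_kulkarniNomizu {h k : V → V → ℝ} (hh : IsSymmBilin h)
    (hk : IsSymmBilin k) : IsACT (kulkarniNomizu h k) := by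
  refine ⟨⟨?_, ?_, ?_, ?_⟩, ?_, ?_, ?_, ?_⟩
  · intros; simp only [kulkarniNomizu, hh.map_smul_add_left, hk.map_smul_add_left]; ring
  · intros; simp only [kulkarniNomizu, hh.map_smul_add_left, hk.map_smul_add_left]; ring
  · intros; simp only [kulkarniNomizu, hh.map_smul_add_right, hk.map_smul_add_right]; ring
  · intros; simp only [kulkarniNomizu, hh.map_smul_add_right, hk.map_smul_add_right]; ring
  · intros; simp only [kulkarniNomizu]; ring
  · intros; simp only [kulkarniNomizu]; ring
  · intro u v x y
    simp only [kulkarniNomizu]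
    rw [hh.symm x v, hh.symm y u, hh.symm x u, hh.symm y v,
      hk.symm x v, hk.symm y u, hk.symm x u, hk.symm y v]
    ring
  · intro u v x y
    simp only [kulkarniNomizu]
    rw [hh.symm x v, hh.symm x u, hh.symm v u, hk.symm x v, hk.symm x u, hk.symm v u]
    ring

section DualFamily

variable {ι : Type*} [Fintype ι] [DecidableEq ι] {g : LinearMap.BilinForm ℝ V}

lemma Module.Basis.sum_bilin_smul_eq (e : Module.Basis ι ℝ V) {f : ι → V}
    (hf : ∀ i j, g (f i) (e j) = if i = j then 1 else 0) (y : V) :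
    ∑ j, g (f j) y • e j = y := by
  have hcoord : ∀ j, g (f j) y = e.repr y j := by
    intro j
    calc g (f j) y = g (f j) (∑ i, e.repr y i • e i) := by rw [e.sum_repr]
      _ = e.repr y j := by
        simp only [map_sum, map_smul, hf, smul_eq_mul, mul_ite, mul_one, mul_zero,
          Finset.sum_ite_eq, Finset.mem_univ, if_true]
  simp only [hcoord, e.sum_repr]

lemma linearIndependent_of_bilin_eq_ite {b d : ι → V}
    (hd : ∀ i j, g (b i) (d j) = if i = j then 1 else 0) : LinearIndependent ℝ d := by
  refine Fintype.linearIndependent_iff.mpr fun c hc i => ?_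
  simpa [map_sum, hd] using congrArg (g (b i)) hc

lemma sum_bilin_dual_basis {b d : ι → V} (hg : ∀ x y, g x y = g y x)
    (hd : ∀ i j, g (b i) (d j) = if i = j then 1 else 0) :
    ∑ j, g (d j) (b j) = Fintype.card ι := by
  simp [hg _ (b _), hd]

variable {b : Module.Basis ι ℝ V} {d : ι → V}

lemma sum_bilin_dual_smul_basis (hg : ∀ x y, g x y = g y x)
    (hd : ∀ i j, g (b i) (d j) = if i = j then 1 else 0) (y : V) :
    ∑ j, g (d j) y • b j = y :=
  b.sum_bilin_smul_eq (fun i j => by rw [hg, hd]; exact if_congr eq_comm rfl rfl) y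

lemma sum_bilin_basis_smul_dual (hg : ∀ x y, g x y = g y x)
    (hd : ∀ i j, g (b i) (d j) = if i = j then 1 else 0) (x : V) :
    ∑ j, g x (b j) • d j = x := by
  have : Module.Finite ℝ V := .of_basis b
  let d' := basisOfLinearIndependentOfCardEqFinrank' d (linearIndependent_of_bilin_eq_ite hd)
    (Module.finrank_eq_card_basis b).symm
  have hb_d' : ∀ i j, g (b i) (d' j) = if i = j then 1 else 0 := by simpa [d'] using hd
  simpa [d', hg x] using d'.sum_bilin_smul_eq hb_d' x

lemma sum_mul_bilin_basis (hg : ∀ x y, g x y = g y x)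
    (hd : ∀ i j, g (b i) (d j) = if i = j then 1 else 0) {T : V → ℝ}
    (hT : ∀ (a : ℝ) (u u' : V), T (a • u + u') = a * T u + T u') (x : V) :
    ∑ j, T (d j) * g x (b j) = T x := by
  conv_rhs => rw [← sum_bilin_basis_smul_dual hg hd x]
  rw [map_sum_smul_of_linear T hT]
  exact Finset.sum_congr rfl fun j _ => mul_comm _ _

lemma sum_mul_bilin_dual (hg : ∀ x y, g x y = g y x)
    (hd : ∀ i j, g (b i) (d j) = if i = j then 1 else 0) {T : V → ℝ}
    (hT : ∀ (a : ℝ) (u u' : V), T (a • u + u') = a * T u + T u') (y : V) :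
    ∑ j, T (b j) * g (d j) y = T y := by
  conv_rhs => rw [← sum_bilin_dual_smul_basis hg hd y]
  rw [map_sum_smul_of_linear T hT]
  exact Finset.sum_congr rfl fun j _ => mul_comm _ _

lemma IsBilin.sum_apply_basis_dual_comm {h : V → V → ℝ} (hh : IsBilin h)
    (hg : ∀ x y, g x y = g y x) (hd : ∀ i j, g (b i) (d j) = if i = j then 1 else 0) :
    ∑ j, h (b j) (d j) = ∑ j, h (d j) (b j) := by
  have hexp : ∀ j, d j = ∑ i, g (d i) (d j) • b i :=
    fun j => (sum_bilin_dual_smul_basis hg hd (d j)).symm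
  calc ∑ j, h (b j) (d j) = ∑ j, ∑ i, g (d i) (d j) * h (b j) (b i) :=
        Finset.sum_congr rfl fun j _ => by
          conv_lhs => rw [hexp j]
          exact map_sum_smul_of_linear (h (b j))
            (fun a u u' => hh.map_smul_add_right a (b j) u u') _ _ _
    _ = ∑ i, ∑ j, g (d i) (d j) * h (b j) (b i) := Finset.sum_comm
    _ = ∑ j, h (d j) (b j) := Finset.sum_congr rfl fun i _ => by
          conv_rhs => rw [hexp i]
          rw [map_sum_smul_of_linear (fun u => h u (b i))
            (fun a u u' => hh.map_smul_add_left a u u' (b i))]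
          simp only [hg (d i)]

lemma IsBilin.sum_kulkarniNomizu_bilin {h : V → V → ℝ} (hh : IsBilin h)
    (hg : ∀ x y, g x y = g y x) (hd : ∀ i j, g (b i) (d j) = if i = j then 1 else 0)
    (x y : V) :
    ∑ j, kulkarniNomizu h (fun u w => g u w) (d j) x y (b j)
      = (∑ j, h (d j) (b j)) * g x y + ((Fintype.card ι : ℝ) - 2) * h x y := by
  simp only [kulkarniNomizu, Finset.sum_sub_distrib, Finset.sum_add_distrib, ← Finset.sum_mul,
    ← Finset.mul_sum, sum_bilin_dual_basis hg hd,
    sum_mul_bilin_basis hg hd (T := fun u => h u y)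
      (fun a u u' => hh.map_smul_add_left a u u' y),
    sum_mul_bilin_dual hg hd (T := h x) (fun a u u' => hh.map_smul_add_right a x u u')]
  ring

end DualFamily

section Curvature

variable {n : ℕ} {g : LinearMap.BilinForm ℝ V} {C : V → V → V → V → ℝ}

lemma IsACT.isBilin_ricci (hC : IsACT C) (b d : Fin n → V) : IsBilin (ricci C b d) where
  map_smul_add_left a x x' y := by
    simp only [ricci, hC.1.2.1, Finset.sum_add_distrib, Finset.mul_sum]
  map_smul_add_right a x y y' := by
    simp only [ricci, hC.1.2.2.1, Finset.sum_add_distrib, Finset.mul_sum]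

lemma IsACT.apply_eq_apply_reverse (hC : IsACT C) (u v x y : V) : C u v x y = C y x v u := by
  obtain ⟨-, hanti₁, hanti₂, hpair, -⟩ := hC
  rw [hpair, hanti₁, hanti₂, neg_neg]

lemma IsACT.isSymmBilin_ricci (hC : IsACT C) {b : Module.Basis (Fin n) ℝ V} {d : Fin n → V}
    (hg : ∀ x y, g x y = g y x) (hd : ∀ i j, g (b i) (d j) = if i = j then 1 else 0) :
    IsSymmBilin (ricci C b d) where
  toIsBilin := hC.isBilin_ricci b d
  symm x y := by
    have hbilin : IsBilin (fun u w => C u y x w) :=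
      ⟨fun a u u' w => hC.1.1 a u u' y x w, fun a u w w' => hC.1.2.2.2 a u y x w w'⟩
    calc ricci C b d x y = ∑ j, C (b j) y x (d j) := by
          simp only [ricci, hC.apply_eq_apply_reverse (d _)]
      _ = ricci C b d y x := hbilin.sum_apply_basis_dual_comm hg hd

lemma IsACT.isSymmBilin_schouten (hC : IsACT C) {b : Module.Basis (Fin n) ℝ V}
    {d : Fin n → V} (hg : ∀ x y, g x y = g y x)
    (hd : ∀ i j, g (b i) (d j) = if i = j then 1 else 0) :
    IsSymmBilin (schouten g C b d) where
  map_smul_add_left a x x' y := by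
    simp only [schouten, (hC.isBilin_ricci b d).map_smul_add_left, map_add, map_smul,
      LinearMap.add_apply, LinearMap.smul_apply, smul_eq_mul]
    ring
  map_smul_add_right a x y y' := by
    simp only [schouten, (hC.isBilin_ricci b d).map_smul_add_right, map_add, map_smul,
      smul_eq_mul]
    ring
  symm x y := by
    simp only [schouten, (hC.isSymmBilin_ricci hg hd).symm x y, hg x y]

lemma IsACT.isACT_weyl (hC : IsACT C) {b : Module.Basis (Fin n) ℝ V} {d : Fin n → V}
    (hg : ∀ x y, g x y = g y x) (hd : ∀ i j, g (b i) (d j) = if i = j then 1 else 0) :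
    IsACT (weyl g C b d) :=
  hC.sub ((hC.isSymmBilin_schouten hg hd).isACT_kulkarniNomizu (isSymmBilin_bilinForm hg))

lemma sum_schouten_dual_basis (hn : 3 ≤ n) {b d : Fin n → V} (hg : ∀ x y, g x y = g y x)
    (hd : ∀ i j, g (b i) (d j) = if i = j then 1 else 0) :
    ∑ j, schouten g C b d (d j) (b j) = scalCurv C b d / (2 * ((n : ℝ) - 1)) := by
  have hn' : (3 : ℝ) ≤ n := by exact_mod_cast hn
  have hn₂ : (n : ℝ) - 2 ≠ 0 := by linarith
  have hn₁ : (n : ℝ) - 1 ≠ 0 := by linarith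
  simp only [schouten, ← Finset.mul_sum, Finset.sum_sub_distrib, sum_bilin_dual_basis hg hd,
    Fintype.card_fin]
  rw [← scalCurv]
  field_simp
  ring

lemma IsACT.ricci_weyl_eq_zero (hn : 3 ≤ n) (hC : IsACT C) {b : Module.Basis (Fin n) ℝ V}
    {d : Fin n → V} (hg : ∀ x y, g x y = g y x)
    (hd : ∀ i j, g (b i) (d j) = if i = j then 1 else 0) (x y : V) :
    ricci (weyl g C b d) b d x y = 0 := by
  have hn' : (3 : ℝ) ≤ n := by exact_mod_cast hn
  have hn₂ : (n : ℝ) - 2 ≠ 0 := by linarith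
  have hn₁ : (n : ℝ) - 1 ≠ 0 := by linarith
  have hKN := (hC.isSymmBilin_schouten hg hd).sum_kulkarniNomizu_bilin hg hd x y
  rw [sum_schouten_dual_basis hn hg hd, Fintype.card_fin] at hKN
  simp only [ricci, weyl, Finset.sum_sub_distrib, hKN, schouten]
  field_simp
  ring

lemma weyl_eq_self_of_ricci_eq_zero {b d : Fin n → V} (h : ∀ x y, ricci C b d x y = 0) :
    weyl g C b d = C := by
  have hS : scalCurv C b d = 0 := by simp [scalCurv, h]
  funext u v x y
  simp [weyl, kulkarniNomizu, schouten, h, hS]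

end Curvature

theorem weyl_isACT_traceFree_general
    {V : Type} [AddCommGroup V] [Module ℝ V] {n : ℕ} (hn : 3 ≤ n)
    (g : LinearMap.BilinForm ℝ V)
    (hgsymm : ∀ x y, g x y = g y x)
    (b : Module.Basis (Fin n) ℝ V) (d : Fin n → V)
    (hd : ∀ i j, g (b i) (d j) = if i = j then 1 else 0)
    (C : V → V → V → V → ℝ) (hC : IsACT C) :
    IsACT (weyl g C (fun i => b i) d) ∧
    (∀ x y : V, ∑ j, weyl g C (fun i => b i) d (d j) x y (b j) = 0) ∧
    ((∀ x y : V, ∑ j, C (d j) x y (b j) = 0) → weyl g C (fun i => b i) d = C) :=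
  ⟨hC.isACT_weyl hgsymm hd, hC.ricci_weyl_eq_zero hn hgsymm hd,
    weyl_eq_self_of_ricci_eq_zero⟩

/-- On an `n`-dimensional scalar product space with `n ≥ 3`, the Weyl
curvature tensor `W_C` of an algebraic curvature tensor `C` is an algebraic curvature
tensor which is trace-free; moreover if `C` is itself trace-free then `W_C = C`. -/
theorem weyl_isACT_traceFree
    {V : Type} [AddCommGroup V] [Module ℝ V] {n : ℕ} (hn : 3 ≤ n)
    (g : LinearMap.BilinForm ℝ V)
    (hgsymm : ∀ x y, g x y = g y x)
    (hgnd : ∀ x : V, (∀ y, g x y = 0) → x = 0)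
    (b : Module.Basis (Fin n) ℝ V) (d : Fin n → V)
    (hd : ∀ i j, g (b i) (d j) = if i = j then 1 else 0)
    (C : V → V → V → V → ℝ) (hC : IsACT C) :
    IsACT (weyl g C (fun i => b i) d) ∧
    (∀ x y : V, ∑ j, weyl g C (fun i => b i) d (d j) x y (b j) = 0) ∧
    ((∀ x y : V, ∑ j, C (d j) x y (b j) = 0) → weyl g C (fun i => b i) d = C) :=
  weyl_isACT_traceFree_general hn g hgsymm b d hd C hC
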